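/- arXiv:1803.07486 — 2 statements merged into one kernel-verified Lean document; each statement's English description precedes it below -/
import Mathlib

section
/- Let Λ be a commutative cancellative monoid (submonoid of a lattice M), R, S ∈ M, and k a field. Let ξ : Λ → k vanish on Λ(R) = {λ ∈ Λ : λ − R ∈ Λ} and be additive on Λ \ Λ(R), and let μ : Λ → k vanish on Λ(S) and be additive on Λ \ Λ(S). Define C(λ₁,λ₂) = ξ(λ₁)μ(λ₂) + ξ(λ₂)μ(λ₁) − dξ(λ₁,λ₂)·μ̃(λ₁+λ₂−R) − dμ(λ₁,λ₂)·ξ̃(λ₁+λ₂−S), where μ̃(x) = μ(x) if x ∈ Λ and 0 otherwise (similarly ξ̃), and dξ(λ₁,λ₂) = ξ(λ₁) + ξ(λ₂) − ξ(λ₁+λ₂). Then the Gerstenhaber-type bracket [dξ, dμ](λ₁,λ₂,λ₃) := dξ(λ₁+λ₂−S, λ₃)dμ(λ₁,λ₂) − dξ(λ₁, λ₂+λ₃−S)dμ(λ₂,λ₃) + dμ(λ₁+λ₂−R, λ₃)dξ(λ₁,λ₂) − dμ(λ₁, λ₂+λ₃−R)dξ(λ₂,λ₃) (with the convention that terms with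 arguments outside Λ are zero) equals dC(λ₁,λ₂,λ₃) for all (λ₁,λ₂,λ₃) ∈ Λ³ with all partial sums in Λ. -/
/-!
By additivity off `Λ(S)`, the coboundary `dμ(λ, λ')` vanishes whenever `λ + λ' - S ∉ Λ`, and
likewise for `dξ` and `R`; so each truncated term of the bracket equals its untruncated version.
After normalising the arguments to `λ₁ + λ₂ + λ₃ - S` and `λ₁ + λ₂ + λ₃ - R`, the formula is a
ring identity in the values of `ξ` and `μ`.
-/

section AdditiveOff

variable {M k : Type*} [AddCommGroup M] (Λ : AddSubmonoid M) (R : M)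

/-- `f` is additive on `Λ \ Λ(R)`, where `Λ(R) = {x ∈ Λ | x - R ∈ Λ}`. -/
def AdditiveOff [Add k] (f : M → k) : Prop :=
  ∀ a b : M, a ∈ Λ → b ∈ Λ → a + b ∈ Λ →
    a - R ∉ (Λ : Set M) → b - R ∉ (Λ : Set M) → a + b - R ∉ (Λ : Set M) →
    f (a + b) = f a + f b

variable {Λ R}

/-- `Λ(R)` is an ideal of `Λ`, so when `x + y ∉ Λ(R)` neither summand lies in `Λ(R)`. -/
theorem AdditiveOff.map_add [Add k] {f : M → k} (hf : AdditiveOff Λ R f)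
    {x y : M} (hx : x ∈ Λ) (hy : y ∈ Λ) (h : x + y - R ∉ Λ) :
    f (x + y) = f x + f y := by
  refine hf x y hx hy (Λ.add_mem hx hy) (fun hxR => h ?_) (fun hyR => h ?_) h
  · simpa only [sub_add_eq_add_sub] using Λ.add_mem hxR hy
  · simpa only [add_sub_assoc'] using Λ.add_mem hx hyR

theorem AdditiveOff.ite_mul_coboundary [Ring k] {f : M → k} (hf : AdditiveOff Λ R f)
    {x y : M} (hx : x ∈ Λ) (hy : y ∈ Λ) [Decidable (x + y - R ∈ Λ)] (a : k) :
    (if x + y - R ∈ Λ then a * (f x + f y - f (x + y)) else 0) = a * (f x + f y - f (x + y)) := by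
  split_ifs with h
  · rfl
  · rw [hf.map_add hx hy h, sub_self, mul_zero]

end AdditiveOff

open scoped Classical in
theorem stmt6_general {M k : Type*} [AddCommGroup M] [Field k]
    (Λ : AddSubmonoid M) (R S : M) (ξ μ : M → k)
    (hξ_add : ∀ a b : M, a ∈ Λ → b ∈ Λ → a + b ∈ Λ →
      a - R ∉ (Λ : Set M) → b - R ∉ (Λ : Set M) → a + b - R ∉ (Λ : Set M) →
      ξ (a + b) = ξ a + ξ b)
    (hμ_add : ∀ a b : M, a ∈ Λ → b ∈ Λ → a + b ∈ Λ →
      a - S ∉ (Λ : Set M) → b - S ∉ (Λ : Set M) → a + b - S ∉ (Λ : Set M) →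
      μ (a + b) = μ a + μ b) :
    ∀ l₁ ∈ Λ, ∀ l₂ ∈ Λ, ∀ l₃ ∈ Λ,
      (let dξ : M → M → k := fun x y => ξ x + ξ y - ξ (x + y)
       let dμ : M → M → k := fun x y => μ x + μ y - μ (x + y)
       let C : M → M → k := fun x y =>
         ξ x * μ y + ξ y * μ x - dξ x y * μ (x + y - R) - dμ x y * ξ (x + y - S)
       (if l₁ + l₂ - S ∈ Λ then dξ (l₁ + l₂ - S) l₃ * dμ l₁ l₂ else 0)
         - (if l₂ + l₃ - S ∈ Λ then dξ l₁ (l₂ + l₃ - S) * dμ l₂ l₃ else 0)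
         + (if l₁ + l₂ - R ∈ Λ then dμ (l₁ + l₂ - R) l₃ * dξ l₁ l₂ else 0)
         - (if l₂ + l₃ - R ∈ Λ then dμ l₁ (l₂ + l₃ - R) * dξ l₂ l₃ else 0)
        = C l₂ l₃ - C (l₁ + l₂) l₃ + C l₁ (l₂ + l₃) - C l₁ l₂) := by
  have hξ : AdditiveOff Λ R ξ := hξ_add
  have hμ : AdditiveOff Λ S μ := hμ_add
  intro l₁ h₁ l₂ h₂ l₃ h₃
  dsimp only
  rw [hμ.ite_mul_coboundary h₁ h₂, hμ.ite_mul_coboundary h₂ h₃,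
    hξ.ite_mul_coboundary h₁ h₂, hξ.ite_mul_coboundary h₂ h₃]
  simp only [sub_add_eq_add_sub, add_sub_assoc', ← add_assoc]
  ring

open scoped Classical in
/-- Sletsjøe's formula `[dξ⁰, dμ⁰] = dC` in the toric setting.
`ξ` vanishes on `Λ(R)` and outside `Λ` (extension by zero) and is additive on
`Λ \ Λ(R)`; similarly for `μ` with `S`. The Gerstenhaber-type bracket of `dξ`
and `dμ` (with the convention that terms whose shifted argument lies outside
`Λ` are zero) equals `dC` for the 2-cochain `C`. -/
theorem stmt6 {M k : Type*} [AddCommGroup M] [Field k]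
    (Λ : AddSubmonoid M) (R S : M) (ξ μ : M → k)
    (hξ_out : ∀ x : M, x ∉ Λ → ξ x = 0)
    (hξ_van : ∀ x ∈ Λ, x - R ∈ (Λ : Set M) → ξ x = 0)
    (hξ_add : ∀ a b : M, a ∈ Λ → b ∈ Λ → a + b ∈ Λ →
      a - R ∉ (Λ : Set M) → b - R ∉ (Λ : Set M) → a + b - R ∉ (Λ : Set M) →
      ξ (a + b) = ξ a + ξ b)
    (hμ_out : ∀ x : M, x ∉ Λ → μ x = 0)
    (hμ_van : ∀ x ∈ Λ, x - S ∈ (Λ : Set M) → μ x = 0)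
    (hμ_add : ∀ a b : M, a ∈ Λ → b ∈ Λ → a + b ∈ Λ →
      a - S ∉ (Λ : Set M) → b - S ∉ (Λ : Set M) → a + b - S ∉ (Λ : Set M) →
      μ (a + b) = μ a + μ b) :
    ∀ l₁ ∈ Λ, ∀ l₂ ∈ Λ, ∀ l₃ ∈ Λ,
      (let dξ : M → M → k := fun x y => ξ x + ξ y - ξ (x + y)
       let dμ : M → M → k := fun x y => μ x + μ y - μ (x + y)
       let C : M → M → k := fun x y =>
         ξ x * μ y + ξ y * μ x - dξ x y * μ (x + y - R) - dμ x y * ξ (x + y - S)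
       (if l₁ + l₂ - S ∈ Λ then dξ (l₁ + l₂ - S) l₃ * dμ l₁ l₂ else 0)
         - (if l₂ + l₃ - S ∈ Λ then dξ l₁ (l₂ + l₃ - S) * dμ l₂ l₃ else 0)
         + (if l₁ + l₂ - R ∈ Λ then dμ (l₁ + l₂ - R) l₃ * dξ l₁ l₂ else 0)
         - (if l₂ + l₃ - R ∈ Λ then dμ l₁ (l₂ + l₃ - R) * dξ l₂ l₃ else 0)
        = C l₂ l₃ - C (l₁ + l₂) l₃ + C l₁ (l₂ + l₃) - C l₁ l₂) :=
  stmt6_general Λ R S ξ μ hξ_add hμ_add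
end

section
/- With V = {t ∈ k^N : Σ t_j d_j = 0} and the bilinear map t ∪ s = class of (t₁s₁d₁,…,t_N s_N d_N) in ker η / im δ as above: if at least two of the vectors d_j, d_i with lattice length ≥ 2 are non-parallel, then t ∪ s = 0 for all t, s ∈ V. -/
/-!
The two non-parallel long edges are linearly independent over `k` (their integer cross product
is nonzero, and `k` has characteristic zero), so `U_i ⊔ U_j` is already all of `k × k`.
Hence any tuple `(w_l)` can be corrected by some `u_l ∈ U_l` to a tuple of total sum zero, and
on the cycle `ℤ/(n+1)` a tuple of total sum zero is a coboundary `b_l - b_(l+1)`, taking `b` to be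
minus the partial sums.
-/

open Finset

open Fin.NatCast in
theorem Fin.exists_sub_add_one_eq_of_sum_eq_zero {M : Type*} [AddCommGroup M] {n : ℕ}
    (f : Fin (n + 1) → M) (hf : ∑ j, f j = 0) :
    ∃ b : Fin (n + 1) → M, ∀ j, b j - b (j + 1) = f j := by
  refine ⟨fun j => -∑ i ∈ range j, f (i : Fin (n + 1)), fun j => ?_⟩
  induction j using Fin.lastCases with
  | last =>
    have hsum : ∑ i ∈ range (n + 1), f (i : Fin (n + 1)) = 0 := by
      rw [← Fin.sum_univ_eq_sum_range (fun i => f (i : Fin (n + 1)))]; simpa using hf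
    rw [sum_range_succ, Fin.natCast_eq_last] at hsum
    simp [Fin.last_add_one, eq_neg_of_add_eq_zero_left hsum]
  | cast i =>
    simp [Fin.coeSucc_eq_succ, sum_range_succ]

theorem Submodule.exists_sub_sub_add_one_mem_of_iSup_eq_top {R M : Type*} [Ring R]
    [AddCommGroup M] [Module R M] {n : ℕ} (U : Fin (n + 1) → Submodule R M)
    (hU : ⨆ j, U j = ⊤) (w : Fin (n + 1) → M) :
    ∃ b : Fin (n + 1) → M, ∀ j, w j - (b j - b (j + 1)) ∈ U j := by
  have hmem : ∑ j, w j ∈ ⨆ j ∈ univ, U j := by simp [hU]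
  obtain ⟨u, hu⟩ := (mem_iSup_finset_iff_exists_sum U _).mp hmem
  obtain ⟨b, hb⟩ := Fin.exists_sub_add_one_eq_of_sum_eq_zero (fun j => w j - u j)
    (by rw [sum_sub_distrib, hu, sub_self])
  exact ⟨b, fun j => by simp [hb]⟩

theorem Prod.exists_smul_eq_smul_of_cross_eq_zero {R : Type*} [CommRing R] [Nontrivial R]
    {x y : R × R} (h : x.1 * y.2 - x.2 * y.1 = 0) :
    ∃ p q : R, (p ≠ 0 ∨ q ≠ 0) ∧ p • x = q • y := by
  have h' : x.1 * y.2 = x.2 * y.1 := sub_eq_zero.mp h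
  by_cases h2 : y.2 ≠ 0 ∨ x.2 ≠ 0
  · exact ⟨y.2, x.2, h2, Prod.ext (by simp [h', mul_comm]) (by simp [mul_comm])⟩
  by_cases h1 : y.1 ≠ 0 ∨ x.1 ≠ 0
  · exact ⟨y.1, x.1, h1, Prod.ext (by simp [mul_comm]) (by simp [h', mul_comm])⟩
  push Not at h1 h2
  exact ⟨1, 0, .inl one_ne_zero, Prod.ext (by simp [h1.2]) (by simp [h2.2])⟩

theorem Prod.span_pair_eq_top_of_cross_ne_zero {K : Type*} [Field K] {x y : K × K}
    (h : x.1 * y.2 - x.2 * y.1 ≠ 0) : Submodule.span K {x, y} = ⊤ := by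
  refine Submodule.eq_top_iff'.mpr fun w => ?_
  have cramer : (x.1 * y.2 - x.2 * y.1) • w
      = (w.1 * y.2 - w.2 * y.1) • x + (x.1 * w.2 - x.2 * w.1) • y := by
    ext <;> simp <;> ring
  rw [← inv_smul_smul₀ h w, cramer]
  exact Submodule.smul_mem _ _ (Submodule.mem_span_pair.mpr ⟨_, _, rfl⟩)

open Finset in
open scoped Classical in
theorem stmt10_general {k : Type*} [Field k] [CharZero k]
    (n : ℕ) (d : Fin (n + 1) → ℤ × ℤ)
    (hlong : ∃ i j : Fin (n + 1),
      (∃ (e : ℤ × ℤ) (m : ℕ), 2 ≤ m ∧ d i = m • e) ∧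
      (∃ (e : ℤ × ℤ) (m : ℕ), 2 ≤ m ∧ d j = m • e) ∧
      ¬∃ (p q : ℤ), (p ≠ 0 ∨ q ≠ 0) ∧ p • d i = q • d j) :
    let dk : Fin (n + 1) → k × k := fun j => (((d j).1 : k), ((d j).2 : k))
    let U : Fin (n + 1) → Submodule k (k × k) := fun j =>
      if ∃ (e : ℤ × ℤ) (m : ℕ), 2 ≤ m ∧ d j = m • e then Submodule.span k {dk j} else ⊥
    ∀ t s : Fin (n + 1) → k,
      (∑ j, t j • dk j = 0) → (∑ j, s j • dk j = 0) →
      ∃ b : Fin (n + 1) → k × k, ∀ j,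
        (t j * s j) • dk j - (b j - b (j + 1)) ∈ U j := by
  intro dk U t s _ _
  obtain ⟨i, j, hi, hj, hnonpar⟩ := hlong
  have hcross : (dk i).1 * (dk j).2 - (dk i).2 * (dk j).1 ≠ 0 := by
    show ((d i).1 : k) * (d j).2 - (d i).2 * (d j).1 ≠ 0
    exact_mod_cast mt Prod.exists_smul_eq_smul_of_cross_eq_zero hnonpar
  have hU : ⨆ l, U l = ⊤ := by
    refine top_unique ((Prod.span_pair_eq_top_of_cross_ne_zero hcross).ge.trans ?_)
    rw [Submodule.span_insert]
    exact sup_le (le_iSup_of_le i (if_pos hi).ge) (le_iSup_of_le j (if_pos hj).ge)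
  exact Submodule.exists_sub_sub_add_one_mem_of_iSup_eq_top U hU _

open Finset in
open scoped Classical in
/-- in the setup of the cup product for 3-dimensional toric
Gorenstein singularities (edge vectors `d_j` of a lattice polygon, `δ_j = 1`
iff `ℓ(d_j) ≥ 2`, `U_j = ⟨δ_j d_j⟩`), if at least two of the edges of lattice
length `≥ 2` are non-parallel, then `t ∪ s = 0` for all `t, s ∈ V`:
the tuple `(t_j s_j d_j)_j` lies in `im δ` modulo the `U_j`. -/
theorem stmt10 {k : Type*} [Field k] [CharZero k]
    (n : ℕ) (a : Fin (n + 1) → ℤ × ℤ) (d : Fin (n + 1) → ℤ × ℤ)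
    (hd : ∀ j, d j = a (j + 1) - a j)
    (hlong : ∃ i j : Fin (n + 1),
      (∃ (e : ℤ × ℤ) (m : ℕ), 2 ≤ m ∧ d i = m • e) ∧
      (∃ (e : ℤ × ℤ) (m : ℕ), 2 ≤ m ∧ d j = m • e) ∧
      ¬∃ (p q : ℤ), (p ≠ 0 ∨ q ≠ 0) ∧ p • d i = q • d j) :
    let dk : Fin (n + 1) → k × k := fun j => (((d j).1 : k), ((d j).2 : k))
    let U : Fin (n + 1) → Submodule k (k × k) := fun j =>
      if ∃ (e : ℤ × ℤ) (m : ℕ), 2 ≤ m ∧ d j = m • e then Submodule.span k {dk j} else ⊥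
    ∀ t s : Fin (n + 1) → k,
      (∑ j, t j • dk j = 0) → (∑ j, s j • dk j = 0) →
      ∃ b : Fin (n + 1) → k × k, ∀ j,
        (t j * s j) • dk j - (b j - b (j + 1)) ∈ U j :=
  stmt10_general n d hlong
end
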